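/- The functor ev₁ : Ar(C) → C exhibits C as the localization of the arrow category Ar(C) at the class W of morphisms (f, g) : (a → b) → (a' → b') for which g is an isomorphism; equivalently, for any category D, precomposition with ev₁ induces an equivalence between Fun(C, D) and the full subcategory of Fun(Ar(C), D) spanned by functors inverting W. -/

import Mathlib

/-!
The functor `c ↦ 𝟙 c` is right adjoint to `ev₁ = Arrow.rightFunc`: a square from `X` to `𝟙 c`
is determined by its target component `X.right ⟶ c`. This right adjoint is fully faithful, and
a functor with a fully faithful right adjoint is the localization at the morphisms it inverts,
which for `ev₁` are exactly the squares with invertible target component.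
-/

open CategoryTheory

universe v u

namespace CategoryTheory.Arrow

variable (C : Type u) [Category.{v} C]

def diag : C ⥤ Arrow C where
  obj c := Arrow.mk (𝟙 c)
  map f := Arrow.homMk f f

def fullyFaithfulDiag : (diag C).FullyFaithful where
  preimage f := f.right
  map_preimage f := by
    ext
    exacts [(Category.id_comp _).symm.trans ((Arrow.w f).symm.trans (Category.comp_id _)), rfl]

instance : (diag C).Full := (fullyFaithfulDiag C).full

instance : (diag C).Faithful := (fullyFaithfulDiag C).faithful

def homEquivDiag (X : Arrow C) (c : C) : (X.right ⟶ c) ≃ (X ⟶ (diag C).obj c) where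
  toFun g := Arrow.homMk (X.hom ≫ g) g (Category.comp_id _)
  invFun φ := φ.right
  left_inv _ := rfl
  right_inv φ := by
    ext
    exacts [(Arrow.w φ).symm.trans (Category.comp_id _), rfl]

def rightFuncAdjDiag : rightFunc ⊣ diag C :=
  Adjunction.mkOfHomEquiv
    { homEquiv := homEquivDiag C
      homEquiv_naturality_left_symm _ _ := rfl
      homEquiv_naturality_right _ _ := by
        ext
        exacts [(Category.assoc _ _ _).symm, rfl] }

theorem isLocalization_rightFunc :
    (rightFunc : Arrow C ⥤ C).IsLocalization
      ((MorphismProperty.isomorphisms C).inverseImage rightFunc) :=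
  (rightFuncAdjDiag C).isLocalization

end CategoryTheory.Arrow

/-- `ev₁ : Ar(C) → C` exhibits `C` as the localization of the arrow category at the
class `W` of squares whose target-component is invertible: for any category `D`,
precomposition with `ev₁` is fully faithful, with essential image the functors
inverting `W`. -/
theorem ev1_is_localization (C : Type*) [Category C]
    (D : Type*) [Category D] :
    (∀ F G : C ⥤ D, Function.Bijective
      (fun α : F ⟶ G => Functor.whiskerLeft (Arrow.rightFunc (C := C)) α)) ∧
    (∀ H : Arrow C ⥤ D,
      (∀ {X Y : Arrow C} (f : X ⟶ Y), IsIso f.right → IsIso (H.map f)) →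
      ∃ F : C ⥤ D, Nonempty (Arrow.rightFunc ⋙ F ≅ H)) := by
  let W := (MorphismProperty.isomorphisms C).inverseImage (Arrow.rightFunc (C := C))
  have := Arrow.isLocalization_rightFunc C
  refine ⟨fun F G => (Localization.fullyFaithfulWhiskeringLeft _ W D).map_bijective F G,
    fun H hH => ?_⟩
  have hHW : W.IsInvertedBy H := fun _ _ f hf => hH f hf
  exact ⟨Localization.lift H hHW Arrow.rightFunc, ⟨Localization.fac H hHW Arrow.rightFunc⟩⟩
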